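/- Let G=(V,E) be a directed graph with node coloring c:V→{1,2} and let G'=(V',E') with node coloring c' be the undirected graph constructed from G as in the context. For c∈{1,2} write col(c):=(2,c,2,2,1). Then for all s,t∈V, every ℓ≥1 and all colors c₁,…,c_ℓ∈{1,2}: there is a walk of length ℓ from s to t in G with node color sequence c₁,…,c_ℓ if and only if there is a walk of length 6ℓ from s_out to t_out in G' with node color sequence 1, col(c₁), 1, col(c₂), …, 1, col(c_ℓ). -/

import Mathlib

/-- `NodeColoredWalk E c s t cs` : there is a walk `s = v₀, v₁, …, v_ℓ = t` in the
graph with edge relation `E` whose node color sequence `c v₁, …, c v_ℓ` equals `cs`. -/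
inductive NodeColoredWalk {V σ : Type*} (E : V → V → Prop) (c : V → σ) :
    V → V → List σ → Prop
  | nil (v : V) : NodeColoredWalk E c v v []
  | cons {u v w : V} {a : σ} {cs : List σ} (he : E u v) (hc : c v = a)
      (hw : NodeColoredWalk E c v w cs) : NodeColoredWalk E c u w (a :: cs)

/-!
Vertex `v` of `G` becomes the path `(v,0) – (v,1) – … – (v,5)`, coloured `1,2,c v,2,2,1`, and an
edge `u → v` becomes the edge `(u,5) – (v,0)`, so a step of `G` into `v` lifts to the walk from
`(u,5)` along the path of `v`. Conversely, a walk from `(u,5)` reading `1,2,γ,2,2,1` must first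
cross to some `(v,0)` with `E u v`, since `(u,4)` has colour `2`, and then move on to `(v,1)`.
The colours `2,2,1` of its last three steps leave it no time to backtrack: it has to run straight
to `(v,5)`, so `γ` is the colour `c v` of `(v,2)`.
-/

namespace NodeColoredWalk

variable {V W σ τ : Type*} {E : V → V → Prop} {c : V → σ}

theorem nil_iff {u w : V} : NodeColoredWalk E c u w [] ↔ u = w :=
  ⟨fun | .nil _ => rfl, fun h => h ▸ .nil u⟩

theorem cons_iff {u w : V} {a : σ} {l : List σ} :
    NodeColoredWalk E c u w (a :: l) ↔ ∃ v, E u v ∧ c v = a ∧ NodeColoredWalk E c v w l :=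
  ⟨fun | .cons he hc hw => ⟨_, he, hc, hw⟩, fun ⟨_, he, hc, hw⟩ => .cons he hc hw⟩

theorem append {u v w : V} {l₁ l₂ : List σ} (h₁ : NodeColoredWalk E c u v l₁)
    (h₂ : NodeColoredWalk E c v w l₂) : NodeColoredWalk E c u w (l₁ ++ l₂) := by
  induction h₁ with
  | nil => exact h₂
  | cons he hc _ ih => exact .cons he hc (ih h₂)

variable {E' : W → W → Prop} {c' : W → τ} {f : V → W} {g : σ → List τ}

theorem flatMap (hstep : ∀ u v, E u v → NodeColoredWalk E' c' (f u) (f v) (g (c v)))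
    {s t : V} {cs : List σ} (h : NodeColoredWalk E c s t cs) :
    NodeColoredWalk E' c' (f s) (f t) (cs.flatMap g) := by
  induction h with
  | nil v => exact .nil (f v)
  | cons he hc _ ih => exact (hc ▸ hstep _ _ he).append ih

theorem of_flatMap (hf : f.Injective)
    (hstep : ∀ u q a l, NodeColoredWalk E' c' (f u) q (g a ++ l) →
      ∃ v, E u v ∧ c v = a ∧ NodeColoredWalk E' c' (f v) q l)
    {s t : V} {cs : List σ} (h : NodeColoredWalk E' c' (f s) (f t) (cs.flatMap g)) :
    NodeColoredWalk E c s t cs := by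
  induction cs generalizing s with
  | nil => exact nil_iff.2 (hf (nil_iff.1 h))
  | cons a cs ih =>
    obtain ⟨v, he, hc, hw⟩ := hstep s _ a _ h
    exact .cons he hc (ih hw)

end NodeColoredWalk

section Gadget

variable {V : Type*} {E : V → V → Prop} {E' : V × Fin 6 → V × Fin 6 → Prop}
  (hE' : ∀ p q, E' p q ↔
      ((p.2 = (5 : Fin 6) ∧ q.2 = 0 ∧ E p.1 q.1) ∨
       (q.2 = (5 : Fin 6) ∧ p.2 = 0 ∧ E q.1 p.1) ∨
       (p.1 = q.1 ∧ ((q.2 : ℕ) = (p.2 : ℕ) + 1 ∨ (p.2 : ℕ) = (q.2 : ℕ) + 1))))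
include hE'

theorem gadget_adj_iff {v w : V} {j k : Fin 6} :
    E' (v, j) (w, k) ↔ (j = 5 ∧ k = 0 ∧ E v w) ∨ (k = 5 ∧ j = 0 ∧ E w v) ∨
      (v = w ∧ ((k : ℕ) = j + 1 ∨ (j : ℕ) = k + 1)) :=
  hE' _ _

theorem gadget_adj_out {v : V} {q : V × Fin 6} (h : E' (v, 5) q) :
    q = (v, 4) ∨ (q.2 = 0 ∧ E v q.1) := by
  obtain ⟨w, k⟩ := q
  rcases (gadget_adj_iff hE').1 h with ⟨-, hk, he⟩ | ⟨-, h0, -⟩ | ⟨rfl, hk⟩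
  · exact .inr ⟨hk, he⟩
  · exact absurd h0 (by decide)
  · exact .inl (congrArg _ (by omega))

theorem gadget_adj_in {v : V} {q : V × Fin 6} (h : E' (v, 0) q) :
    q = (v, 1) ∨ (q.2 = 5 ∧ E q.1 v) := by
  obtain ⟨w, k⟩ := q
  rcases (gadget_adj_iff hE').1 h with ⟨h5, -, -⟩ | ⟨hk, -, he⟩ | ⟨rfl, hk⟩
  · exact absurd h5 (by decide)
  · exact .inr ⟨hk, he⟩
  · exact .inl (congrArg _ (by omega))

theorem gadget_adj_interior {v : V} {j : Fin 6} (h0 : j ≠ 0) (h5 : j ≠ 5) {q : V × Fin 6}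
    (h : E' (v, j) q) : q = (v, j - 1) ∨ q = (v, j + 1) := by
  obtain ⟨w, k⟩ := q
  rcases (gadget_adj_iff hE').1 h with ⟨h5', -, -⟩ | ⟨-, h0', -⟩ | ⟨rfl, hk | hk⟩
  · exact absurd h5' h5
  · exact absurd h0' h0
  · exact .inr (congrArg _ (by omega))
  · exact .inl (congrArg _ (by omega))

variable {c : V → ℕ} {c'' : V × Fin 6 → ℕ}
  (hc'' : ∀ v : V, c'' (v, 0) = 1 ∧ c'' (v, 1) = 2 ∧ c'' (v, 2) = c v ∧
      c'' (v, 3) = 2 ∧ c'' (v, 4) = 2 ∧ c'' (v, 5) = 1)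
include hc''

theorem gadget_walk_of_adj {u v : V} (he : E u v) :
    NodeColoredWalk E' c'' (u, 5) (v, 5) [1, 2, c v, 2, 2, 1] := by
  obtain ⟨h0, h1, h2, h3, h4, h5⟩ := hc'' v
  have path {j k : Fin 6} (hjk : (k : ℕ) = j + 1) : E' (v, j) (v, k) :=
    (gadget_adj_iff hE').2 (.inr (.inr ⟨rfl, .inl hjk⟩))
  exact .cons ((gadget_adj_iff hE').2 (.inl ⟨rfl, rfl, he⟩)) h0 <| .cons (path rfl) h1 <|
    .cons (path rfl) h2 <| .cons (path rfl) h3 <| .cons (path rfl) h4 <|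
    .cons (path rfl) h5 <| .nil _

theorem gadget_step_out {v : V} {q : V × Fin 6} (h : E' (v, 5) q) (hq : c'' q = 1) :
    ∃ w, q = (w, 0) ∧ E v w := by
  rcases gadget_adj_out hE' h with rfl | ⟨hq0, he⟩
  · exact absurd ((hc'' v).2.2.2.2.1.symm.trans hq) (by decide)
  · exact ⟨q.1, Prod.ext rfl hq0, he⟩

theorem gadget_step_in {v : V} {q : V × Fin 6} (h : E' (v, 0) q) (hq : c'' q = 2) :
    q = (v, 1) := by
  rcases gadget_adj_in hE' h with rfl | ⟨hq5, -⟩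
  · rfl
  · obtain ⟨w, k⟩ := q
    obtain rfl : k = 5 := hq5
    exact absurd ((hc'' w).2.2.2.2.2.symm.trans hq) (by decide)

theorem gadget_color_ne_one_of_adj_two {v : V} {q : V × Fin 6} (h : E' (v, 2) q) :
    c'' q ≠ 1 := by
  obtain ⟨-, h1, -, h3, -, -⟩ := hc'' v
  obtain rfl | rfl := gadget_adj_interior hE' (by decide) (by decide) h
  · exact h1 ▸ by decide
  · exact h3 ▸ by decide

theorem gadget_not_walk_two_one {v : V} {q : V × Fin 6} {l : List ℕ} :
    ¬ NodeColoredWalk E' c'' (v, 1) q (2 :: 1 :: l) := by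
  simp only [NodeColoredWalk.cons_iff]
  rintro ⟨p, hp, hcp, r, hr, hcr, -⟩
  obtain rfl | rfl := gadget_adj_interior hE' (by decide) (by decide) hp
  · exact absurd ((hc'' v).1.symm.trans hcp) (by decide)
  · exact gadget_color_ne_one_of_adj_two hE' hc'' hr hcr

theorem exists_adj_of_gadget_walk {u : V} {q : V × Fin 6} {γ : ℕ} {l : List ℕ}
    (h : NodeColoredWalk E' c'' (u, 5) q ([1, 2, γ, 2, 2, 1] ++ l)) :
    ∃ v, E u v ∧ c v = γ ∧ NodeColoredWalk E' c'' (v, 5) q l := by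
  simp only [List.cons_append, List.nil_append, NodeColoredWalk.cons_iff] at h
  obtain ⟨_, hp₀, hc₀, _, hp₁, hc₁, p₂, hp₂, hc₂, p₃, hp₃, hc₃, p₄, hp₄, hc₄, p₅, hp₅, hc₅, h⟩ := h
  obtain ⟨v, rfl, huv⟩ := gadget_step_out hE' hc'' hp₀ hc₀
  obtain rfl := gadget_step_in hE' hc'' hp₁ hc₁
  obtain ⟨-, -, h2, h3, -, -⟩ := hc'' v
  obtain rfl | rfl := gadget_adj_interior hE' (by decide) (by decide) hp₂
  · obtain rfl := gadget_step_in hE' hc'' hp₃ hc₃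
    exact absurd (.cons hp₄ hc₄ (.cons hp₅ hc₅ h)) (gadget_not_walk_two_one hE' hc'')
  obtain rfl | rfl := gadget_adj_interior hE' (by decide) (by decide) hp₃
  · exact absurd (.cons hp₄ hc₄ (.cons hp₅ hc₅ h)) (gadget_not_walk_two_one hE' hc'')
  obtain rfl | rfl := gadget_adj_interior hE' (by decide) (by decide) hp₄
  · exact absurd hc₅ (gadget_color_ne_one_of_adj_two hE' hc'' hp₅)
  obtain rfl | rfl := gadget_adj_interior hE' (by decide) (by decide) hp₅
  · exact absurd (h3.symm.trans hc₅) (by decide)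
  · exact ⟨v, huv, h2.symm.trans hc₂, h⟩

end Gadget

theorem directed_node2_to_undirected_node2_general {V : Type*} (E : V → V → Prop)
    (c : V → ℕ)
    (E' : V × Fin 6 → V × Fin 6 → Prop)
    (hE' : ∀ p q, E' p q ↔
      ((p.2 = (5 : Fin 6) ∧ q.2 = 0 ∧ E p.1 q.1) ∨
       (q.2 = (5 : Fin 6) ∧ p.2 = 0 ∧ E q.1 p.1) ∨
       (p.1 = q.1 ∧ ((q.2 : ℕ) = (p.2 : ℕ) + 1 ∨ (p.2 : ℕ) = (q.2 : ℕ) + 1))))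
    (c'' : V × Fin 6 → ℕ)
    (hc'' : ∀ v : V, c'' (v, 0) = 1 ∧ c'' (v, 1) = 2 ∧ c'' (v, 2) = c v ∧
      c'' (v, 3) = 2 ∧ c'' (v, 4) = 2 ∧ c'' (v, 5) = 1)
    (s t : V) (cs : List ℕ) :
    NodeColoredWalk E c s t cs ↔
      NodeColoredWalk E' c'' (s, 5) (t, 5)
        (cs.flatMap fun γ => [1, 2, γ, 2, 2, 1]) :=
  ⟨NodeColoredWalk.flatMap (f := (·, 5)) (g := fun γ => [1, 2, γ, 2, 2, 1])
      fun _ _ he => gadget_walk_of_adj hE' hc'' he,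
    NodeColoredWalk.of_flatMap (Prod.mk_left_injective 5) fun _ _ _ _ h =>
      exists_adj_of_gadget_walk hE' hc'' h⟩

/-- Let `G = (V, E)` be a directed graph with node coloring
`c : V → {1,2}` and let `G'` with node coloring `c''` be the undirected gadget graph:
for each `v ∈ V` the six vertices `v_in = (v,0), v^(1) = (v,1), …, v_out = (v,5)`,
path edges `{v_in, v^(1)}, …, {v^(4), v_out}`, cross edges `{u_out, v_in}` for every
`(u, v) ∈ E`; `c'' v_in = c'' v_out = 1` and `(c'' v^(1), …, c'' v^(4)) =
(2, c v, 2, 2)`. Writing `col γ := (2, γ, 2, 2, 1)`, for all `s, t ∈ V`, `ℓ ≥ 1` and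
`c₁, …, c_ℓ ∈ {1,2}`: there is a walk of length `ℓ` from `s` to `t` in `G` with node
color sequence `c₁, …, c_ℓ` iff there is a walk of length `6ℓ` from `s_out` to
`t_out` in `G'` with node color sequence `1, col c₁, 1, col c₂, …, 1, col c_ℓ`. -/
theorem directed_node2_to_undirected_node2 {V : Type*} (E : V → V → Prop)
    (c : V → ℕ) (hc : ∀ v, c v = 1 ∨ c v = 2)
    (E' : V × Fin 6 → V × Fin 6 → Prop)
    (hE' : ∀ p q, E' p q ↔
      ((p.2 = (5 : Fin 6) ∧ q.2 = 0 ∧ E p.1 q.1) ∨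
       (q.2 = (5 : Fin 6) ∧ p.2 = 0 ∧ E q.1 p.1) ∨
       (p.1 = q.1 ∧ ((q.2 : ℕ) = (p.2 : ℕ) + 1 ∨ (p.2 : ℕ) = (q.2 : ℕ) + 1))))
    (c'' : V × Fin 6 → ℕ)
    (hc'' : ∀ v : V, c'' (v, 0) = 1 ∧ c'' (v, 1) = 2 ∧ c'' (v, 2) = c v ∧
      c'' (v, 3) = 2 ∧ c'' (v, 4) = 2 ∧ c'' (v, 5) = 1)
    (s t : V) (cs : List ℕ) (hcs : ∀ γ ∈ cs, γ = 1 ∨ γ = 2) (hne : cs ≠ []) :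
    NodeColoredWalk E c s t cs ↔
      NodeColoredWalk E' c'' (s, 5) (t, 5)
        (cs.flatMap fun γ => [1, 2, γ, 2, 2, 1]) :=
  directed_node2_to_undirected_node2_general E c E' hE' c'' hc'' s t cs
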